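/- arXiv:1609.02051 — 5 statements merged into one kernel-verified Lean document; each statement's English description precedes it below -/
import Mathlib

section
/- If A is a lower triangular n×n complex matrix with 1's on the main diagonal and all entries of absolute value at most 1, then every entry of A⁻¹ has absolute value at most (n-1)!. -/
open Complex

open scoped Nat in
/-- Cramer's rule: an entry of `A⁻¹` is a signed `m × m` minor divided by `det A`.
(When `det A = 0`, both sides are `0`.) -/
theorem Matrix.norm_inv_apply_le {𝕜 : Type*} [NormedField 𝕜] {m : ℕ}
    (A : Matrix (Fin (m + 1)) (Fin (m + 1)) 𝕜) {c : ℝ} (hc : ∀ i j, ‖A i j‖ ≤ c)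
    (i j : Fin (m + 1)) :
    ‖A⁻¹ i j‖ ≤ m ! * c ^ m / ‖A.det‖ := by
  have hminor : ‖(A.submatrix j.succAbove i.succAbove).det‖ ≤ m ! * c ^ m := by
    have h := Matrix.det_le (A := A.submatrix j.succAbove i.succAbove)
      (abv := NormedField.toAbsoluteValue 𝕜) fun _ _ => hc _ _
    rwa [Fintype.card_fin, nsmul_eq_mul] at h
  rw [Matrix.inv_def, Ring.inverse_eq_inv', Matrix.smul_apply, smul_eq_mul,
    Matrix.adjugate_fin_succ_eq_det_submatrix, norm_mul, norm_mul, norm_pow, norm_neg, norm_one,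
    one_pow, one_mul, norm_inv, inv_mul_eq_div]
  exact div_le_div_of_nonneg_right hminor (norm_nonneg _)

theorem inv_entries_le_factorial_general (n : ℕ)
    (A : Matrix (Fin n) (Fin n) ℂ)
    (hlow : ∀ i j : Fin n, i < j → A i j = 0)
    (hdiag : ∀ i : Fin n, A i i = 1)
    (hbd : ∀ i j : Fin n, ‖A i j‖ ≤ 1) :
    ∀ i j : Fin n, ‖A⁻¹ i j‖ ≤ (Nat.factorial (n - 1) : ℝ) := by
  cases n with
  | zero => exact fun i => i.elim0
  | succ m =>
    have hdet : A.det = 1 := by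
      rw [Matrix.det_of_isLowerTriangular A hlow]
      simp [hdiag]
    intro i j
    simpa [hdet] using A.norm_inv_apply_le hbd i j

theorem inv_entries_le_factorial (n : ℕ) (hn : 1 ≤ n)
    (A : Matrix (Fin n) (Fin n) ℂ)
    (hlow : ∀ i j : Fin n, i < j → A i j = 0)
    (hdiag : ∀ i : Fin n, A i i = 1)
    (hbd : ∀ i j : Fin n, ‖A i j‖ ≤ 1) :
    ∀ i j : Fin n, ‖A⁻¹ i j‖ ≤ (Nat.factorial (n - 1) : ℝ) :=
  inv_entries_le_factorial_general n A hlow hdiag hbd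
end

section
/- If a ℂ-convex domain D in ℂⁿ contains a complex line, then D is affinely equivalent to ℂ × D' for some domain D' ⊆ ℂⁿ⁻¹. -/
/-!
Suppose `z ∈ D` but `q = z + s • b ∉ D`. The complex lines through `q` with directions
`m • b + (a - z)`, `m ∈ ℂ`, meet `D` in simply connected open sets of parameters `u` which avoid
`u = 0` and contain `u = 1` (the point on the line `a + ℂ b`). Each carries a continuous
logarithm of `u` normalised at `1`, and by the tube lemma these logarithms depend continuously
on `m` as well. But the points `z + v • (a - z)` with `|v|` small lie in `D`, on the line with
`m = -s / v` at parameter `u = v`: this yields a continuous logarithm on a small circle, which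
is absurd. So `D` is invariant under translation by `ℂ b`, and any linear coordinates sending `b`
to `(1, 0)` exhibit `D` as a cylinder.
-/

open Set

/-- A domain is `ℂ`-convex if every nonempty intersection with a complex affine line is
connected and simply connected. -/
def CConvex (n : ℕ) (D : Set (EuclideanSpace ℂ (Fin n))) : Prop :=
  ∀ a b : EuclideanSpace ℂ (Fin n), b ≠ 0 →
    ({t : ℂ | a + t • b ∈ D}).Nonempty →
      IsConnected {t : ℂ | a + t • b ∈ D} ∧
        SimplyConnectedSpace {t : ℂ | a + t • b ∈ D}

namespace Complex

theorem eqOn_of_exp_eqOn {A : Type*} [TopologicalSpace A] {s : Set A}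
    (hs : IsPreconnected s) {g₁ g₂ : A → ℂ} (h₁ : ContinuousOn g₁ s) (h₂ : ContinuousOn g₂ s)
    (he : ∀ x ∈ s, exp (g₁ x) = exp (g₂ x)) {x₀ : A} (hx₀ : x₀ ∈ s) (h : g₁ x₀ = g₂ x₀) :
    EqOn g₁ g₂ s :=
  isCoveringMap_exp.eqOn_of_comp_eqOn hs h₁ h₂ (fun x hx => Subtype.ext (he x hx)) hx₀ h

theorem exists_continuousOn_log {U : Set ℂ} (hU : IsOpen U) [SimplyConnectedSpace U]
    (h0 : (0 : ℂ) ∉ U) {z₀ w₀ : ℂ} (hz₀ : z₀ ∈ U) (hw₀ : exp w₀ = z₀) :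
    ∃ L : ℂ → ℂ, ContinuousOn L U ∧ L z₀ = w₀ ∧ ∀ z ∈ U, exp (L z) = z := by
  classical
  have := hU.locallyPathConnectedSpace
  obtain ⟨F, ⟨hF₀, hF⟩, -⟩ := isCoveringMapOn_exp.existsUnique_continuousMap_lifts
    ⟨((↑) : U → ℂ), continuous_subtype_val⟩ (a₀ := ⟨z₀, hz₀⟩) hw₀
    (fun z hz => h0 (hz ▸ z.2))
  refine ⟨fun z => if hz : z ∈ U then F ⟨z, hz⟩ else 0, ?_, by simp [hz₀, hF₀], fun z hz => ?_⟩
  · rw [continuousOn_iff_continuous_domRestrict]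
    convert F.continuous with z
    simp
  · simpa [hz] using congrFun hF ⟨z, hz⟩

theorem not_exists_continuousOn_log_sphere {r : ℝ} (hr : 0 < r) :
    ¬ ∃ L : ℂ → ℂ, ContinuousOn L (Metric.sphere 0 r) ∧
      ∀ z ∈ Metric.sphere 0 r, exp (L z) = z := by
  rintro ⟨L, hL, hexp⟩
  have hmem (θ : ℝ) : circleMap 0 r θ ∈ Metric.sphere 0 r := circleMap_mem_sphere 0 hr.le θ
  set g : ℝ → ℂ := fun θ => L (circleMap 0 r θ) - θ * I
  have hg : Continuous g :=
    (hL.comp_continuous (continuous_circleMap 0 r) hmem).sub (by fun_prop)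
  have hexpg (θ : ℝ) : exp (g θ) = r := by
    rw [exp_sub, hexp _ (hmem θ), circleMap, zero_add, mul_div_cancel_right₀ _ (exp_ne_zero _)]
  have h2π := eqOn_of_exp_eqOn isPreconnected_univ hg.continuousOn continuousOn_const
    (fun θ _ => by rw [hexpg, hexpg]) (mem_univ 0) rfl (mem_univ (2 * Real.pi))
  simp only [g, (periodic_circleMap 0 r).eq, ofReal_zero, zero_mul, sub_zero] at h2π
  simpa [Real.pi_ne_zero] using congrArg im h2π

open Topology Filter in
theorem exists_continuousOn_log_of_slices {M : Type*} [TopologicalSpace M]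
    {Γ : Set (M × ℂ)} (hΓ : IsOpen Γ) (hsc : ∀ m, SimplyConnectedSpace {u | (m, u) ∈ Γ})
    (h1 : ∀ m, (m, 1) ∈ Γ) (h0 : ∀ m, (m, 0) ∉ Γ) :
    ∃ L : M × ℂ → ℂ, ContinuousOn L Γ ∧ ∀ p ∈ Γ, exp (L p) = p.2 := by
  have hslice (m : M) : IsOpen {u | (m, u) ∈ Γ} := hΓ.preimage (Continuous.prodMk_right m)
  choose Λ hΛc hΛ1 hΛexp using fun m =>
    have := hsc m; exists_continuousOn_log (hslice m) (h0 m) (h1 m) exp_zero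
  refine ⟨fun p => Λ p.1 p.2, ?_, fun p hp => hΛexp p.1 p.2 hp⟩
  rintro ⟨m₀, v₀⟩ hp
  refine ContinuousAt.continuousWithinAt ?_
  -- For `m` near `m₀`, the slice of `m` contains a path from `1` to `v₀` in the slice of `m₀`
  -- together with a ball around `v₀`, and there `Λ m` agrees with `Λ m₀`.
  have hpath : IsPathConnected {u | (m₀, u) ∈ Γ} :=
    isPathConnected_iff_pathConnectedSpace.mpr (have := hsc m₀; inferInstance)
  obtain ⟨γ, hγ⟩ := hpath.joinedIn 1 (h1 m₀) v₀ hp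
  obtain ⟨U, V, hU, hV, hm₀U, hγV, hUV⟩ := generalized_tube_lemma isCompact_singleton
    (isCompact_range γ.continuous) hΓ (by rintro ⟨m, u⟩ ⟨rfl, t, rfl⟩; exact hγ t)
  obtain ⟨ε, hε, hball⟩ := Metric.isOpen_iff.mp hV v₀ (hγV ⟨1, γ.target⟩)
  set S := range γ ∪ Metric.ball v₀ ε
  have hS : IsPreconnected S := (isPreconnected_range γ.continuous).union v₀ ⟨1, γ.target⟩
    (Metric.mem_ball_self hε) (convex_ball v₀ ε).isPreconnected
  have hSV : S ⊆ V := union_subset hγV hball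
  have hagree (m : M) (hm : m ∈ U) : EqOn (Λ m) (Λ m₀) S :=
    eqOn_of_exp_eqOn hS ((hΛc m).mono fun u hu => hUV ⟨hm, hSV hu⟩)
      ((hΛc m₀).mono fun u hu => hUV ⟨hm₀U rfl, hSV hu⟩)
      (fun u hu => by rw [hΛexp m u (hUV ⟨hm, hSV hu⟩), hΛexp m₀ u (hUV ⟨hm₀U rfl, hSV hu⟩)])
      (Or.inl ⟨0, γ.source⟩) (by rw [hΛ1, hΛ1])
  have hlocal : (fun p => Λ m₀ p.2) =ᶠ[𝓝 (m₀, v₀)] fun p => Λ p.1 p.2 := by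
    filter_upwards [prod_mem_nhds (hU.mem_nhds (hm₀U rfl)) (Metric.ball_mem_nhds v₀ hε)]
      with p hp
    exact (hagree p.1 hp.1 (Or.inr hp.2)).symm
  exact (((hΛc m₀).continuousAt ((hslice m₀).mem_nhds hp)).comp continuousAt_snd).congr hlocal

end Complex

theorem add_smul_mem_of_forall_add_smul_mem {E : Type*} [AddCommGroup E] [Module ℂ E]
    [TopologicalSpace E] [ContinuousAdd E] [ContinuousSMul ℂ E] {D : Set E} (hD : IsOpen D)
    (hsc : ∀ a b : E, b ≠ 0 → {t : ℂ | a + t • b ∈ D}.Nonempty →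
      SimplyConnectedSpace {t : ℂ | a + t • b ∈ D})
    {a b : E} (hline : ∀ t : ℂ, a + t • b ∈ D) {z : E} (hz : z ∈ D) (s : ℂ) : z + s • b ∈ D := by
  by_cases hzline : ∃ t : ℂ, a + t • b = z
  · obtain ⟨t, rfl⟩ := hzline
    simpa [add_assoc, add_smul] using hline (t + s)
  by_contra hq
  set Γ : Set (ℂ × ℂ) := {p | z + s • b + p.2 • (p.1 • b + (a - z)) ∈ D}
  have hdir (m : ℂ) : m • b + (a - z) ≠ 0 := fun h =>
    hzline ⟨m, by rw [← sub_eq_zero, ← h]; module⟩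
  have hΓ : IsOpen Γ := hD.preimage (by fun_prop)
  have hone (m : ℂ) : (m, 1) ∈ Γ := by
    show z + s • b + (1 : ℂ) • (m • b + (a - z)) ∈ D
    rw [show z + s • b + (1 : ℂ) • (m • b + (a - z)) = a + (s + m) • b by module]
    exact hline (s + m)
  have hzero (m : ℂ) : (m, 0) ∉ Γ := by simpa [Γ] using hq
  obtain ⟨L, hLc, hLexp⟩ := Complex.exists_continuousOn_log_of_slices hΓ
    (fun m => hsc _ _ (hdir m) ⟨1, hone m⟩) hone hzero
  obtain ⟨r, hr, hball⟩ := Metric.isOpen_iff.mp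
    (hD.preimage (by fun_prop : Continuous fun v : ℂ => z + v • (a - z))) 0 (by simpa using hz)
  have hne : ∀ v ∈ Metric.sphere (0 : ℂ) (r / 2), v ≠ 0 := fun v hv =>
    ne_zero_of_mem_sphere (half_pos hr).ne' ⟨v, hv⟩
  have hcircle : MapsTo (fun v => (-s / v, v)) (Metric.sphere 0 (r / 2)) Γ := by
    intro v hv
    have hv0 := hne v hv
    show z + s • b + v • ((-s / v) • b + (a - z)) ∈ D
    rw [smul_add, smul_smul, mul_div_cancel₀ _ hv0,
      show z + s • b + ((-s) • b + v • (a - z)) = z + v • (a - z) by module]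
    exact hball (by simp_all)
  exact Complex.not_exists_continuousOn_log_sphere (half_pos hr)
    ⟨fun v => L (-s / v, v),
      hLc.comp ((continuousOn_const.div continuousOn_id hne).prodMk continuousOn_id) hcircle,
      fun v hv => hLexp _ (hcircle hv)⟩

open Module in
theorem exists_linearEquiv_prod_apply_eq {K E F : Type*} [Field K] [AddCommGroup E] [Module K E]
    [FiniteDimensional K E] [AddCommGroup F] [Module K F] [FiniteDimensional K F]
    (hF : finrank K F + 1 = finrank K E) {b : E} (hb : b ≠ 0) :
    ∃ φ : E ≃ₗ[K] K × F, φ b = (1, 0) := by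
  obtain ⟨C, hC⟩ := (K ∙ b).exists_isCompl
  have hCF : finrank K C = finrank K F := by
    have := Submodule.finrank_add_eq_of_isCompl hC
    rw [finrank_span_singleton hb] at this
    omega
  refine ⟨(Submodule.prodEquivOfIsCompl _ _ hC).symm ≪≫ₗ
    (LinearEquiv.toSpanNonzeroSingleton K E b hb).symm.prodCongr
      (LinearEquiv.ofFinrankEq C F hCF), ?_⟩
  have hb' := Submodule.prodEquivOfIsCompl_symm_apply_left _ _ hC
    ⟨b, Submodule.mem_span_singleton_self b⟩
  rw [LinearEquiv.trans_apply, hb']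
  simp [LinearEquiv.symm_apply_eq]

theorem LinearEquiv.image_eq_univ_prod_of_add_smul_mem {K E F : Type*} [Ring K]
    [AddCommGroup E] [Module K E] [AddCommGroup F] [Module K F] (φ : E ≃ₗ[K] K × F) {b : E}
    (hφb : φ b = (1, 0)) {D : Set E} (hD : ∀ x ∈ D, ∀ t : K, x + t • b ∈ D) :
    φ '' D = univ ×ˢ {y | φ.symm (0, y) ∈ D} := by
  ext ⟨t, y⟩
  have hsymm : φ.symm (t, y) = φ.symm (0, y) + t • b := by
    rw [← φ.symm_apply_apply b, hφb, ← map_smul, ← map_add]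
    simp
  rw [φ.image_eq_preimage_symm, mem_preimage, hsymm]
  refine ⟨fun h => ⟨mem_univ t, ?_⟩, fun h => hD _ h.2 t⟩
  simpa using hD _ h (-t)

theorem cconvex_with_line_is_cylinder (n : ℕ) (hn : 1 ≤ n)
    (D : Set (EuclideanSpace ℂ (Fin n))) (hD : IsOpen D) (hconn : IsConnected D)
    (hcc : CConvex n D)
    (a b : EuclideanSpace ℂ (Fin n)) (hb : b ≠ 0) (hline : ∀ t : ℂ, a + t • b ∈ D) :
    ∃ (T : EuclideanSpace ℂ (Fin n) ≃ᵃ[ℂ] ℂ × EuclideanSpace ℂ (Fin (n - 1)))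
      (D' : Set (EuclideanSpace ℂ (Fin (n - 1)))),
      IsOpen D' ∧ IsConnected D' ∧ T '' D = Set.univ ×ˢ D' := by
  obtain ⟨φ, hφb⟩ := exists_linearEquiv_prod_apply_eq
    (F := EuclideanSpace ℂ (Fin (n - 1)))
    (by rw [finrank_euclideanSpace_fin, finrank_euclideanSpace_fin]; omega) hb
  have hinv : ∀ x ∈ D, ∀ t : ℂ, x + t • b ∈ D := fun x hx =>
    add_smul_mem_of_forall_add_smul_mem hD (fun a b hb hne => (hcc a b hb hne).2) hline hx
  have himage := φ.image_eq_univ_prod_of_add_smul_mem hφb hinv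
  refine ⟨φ.toAffineEquiv, {y | φ.symm (0, y) ∈ D}, hD.preimage ?_, ?_, himage⟩
  · exact (φ.symm.toLinearMap.comp (LinearMap.inr ℂ ℂ _)).continuous_of_finiteDimensional
  · rw [← snd_image_prod (univ_nonempty (α := ℂ)) {y | φ.symm (0, y) ∈ D}, ← himage,
      image_image]
    exact hconn.image _
      (continuous_snd.comp φ.toLinearMap.continuous_of_finiteDimensional).continuousOn
end

section
/- For ζ ∈ 𝔻 and t ∈ 𝔻, the Möbius map f_ζ(t) = (t + ζ)/(1 + conj(ζ)·t) satisfies |f_ζ(t) - e^{iθ}| ≤ (1-|ζ|)(1+|t|)/(1-|ζ||t|), where ζ = |ζ|e^{iθ}. -/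
/-!
Writing `ζ = r e` with `|e| = 1`, the identity `e ē = 1` makes the numerator of `f_ζ(t) - e`
factor as `(t + r e) - (1 + r ē t) e = (1 - r)(t - e)`. Hence
`|f_ζ(t) - e| = (1 - r) |t - e| / |1 + r ē t| ≤ (1 - r)(1 + |t|) / (1 - r |t|)`.
-/

open Complex ComplexConjugate

lemma add_mul_sub_mul_one_add_conj_mul {e : ℂ} (he : ‖e‖ = 1) (r : ℝ) (t : ℂ) :
    t + r * e - (1 + conj (r * e) * t) * e = ((1 - r : ℝ) : ℂ) * (t - e) := by
  have hee : e * conj e = 1 := by simp [mul_conj', he]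
  push_cast
  simp only [map_mul, conj_ofReal]
  linear_combination (-(r : ℂ) * t) * hee

lemma one_sub_norm_mul_norm_le_norm_one_add_conj_mul (ζ t : ℂ) :
    1 - ‖ζ‖ * ‖t‖ ≤ ‖1 + conj ζ * t‖ := by
  simpa [norm_mul] using norm_sub_norm_le (1 : ℂ) (-(conj ζ * t))

theorem mobius_dist_to_boundary_point_general (ζ t : ℂ)
    (hζ : ‖ζ‖ < 1) (ht : ‖t‖ < 1)
    (θ : ℝ) (hpolar : ζ = (‖ζ‖ : ℂ) * Complex.exp (θ * Complex.I)) :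
    ‖(t + ζ) / (1 + (starRingEnd ℂ) ζ * t) - Complex.exp (θ * Complex.I)‖ ≤
      (1 - ‖ζ‖) * (1 + ‖t‖) /
        (1 - ‖ζ‖ * ‖t‖) := by
  set e := exp (θ * I)
  have he : ‖e‖ = 1 := norm_exp_ofReal_mul_I θ
  have hden := one_sub_norm_mul_norm_le_norm_one_add_conj_mul ζ t
  have hpos : 0 < 1 - ‖ζ‖ * ‖t‖ := by nlinarith [norm_nonneg ζ, norm_nonneg t]
  have hd : 1 + conj ζ * t ≠ 0 := norm_pos_iff.mp (hpos.trans_le hden)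
  have hnum := add_mul_sub_mul_one_add_conj_mul he ‖ζ‖ t
  rw [← hpolar] at hnum
  rw [div_sub' hd, hnum, norm_div, norm_mul, norm_real, Real.norm_of_nonneg (by linarith)]
  gcongr
  exact (norm_sub_le t e).trans (by rw [he, add_comm])

theorem mobius_dist_to_boundary_point (ζ t : ℂ) (hζ0 : ζ ≠ 0)
    (hζ : ‖ζ‖ < 1) (ht : ‖t‖ < 1)
    (θ : ℝ) (hpolar : ζ = (‖ζ‖ : ℂ) * Complex.exp (θ * Complex.I)) :
    ‖(t + ζ) / (1 + (starRingEnd ℂ) ζ * t) - Complex.exp (θ * Complex.I)‖ ≤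
      (1 - ‖ζ‖) * (1 + ‖t‖) /
        (1 - ‖ζ‖ * ‖t‖) :=
  mobius_dist_to_boundary_point_general ζ t hζ ht θ hpolar
end

section
/- Let G be a plane domain with 𝔻_r ⊆ G ⊆ 𝔻 where 𝔻_r = {ζ ∈ 𝔻 : |ζ - 1| < r} for some r ∈ (0,2). Then for ζ ∈ G near 1, s_G(ζ) ≥ ρ(ζ) := (|ζ| + r' - 1)/(1 - (1-r')|ζ|) for any r' ∈ (1-|ζ|, r) with |ζ/|ζ| - 1| < r - r'. -/
/-!
The disc automorphism `φ_ζ t = (t - ζ) / (1 - conj ζ * t)` maps `G` injectively into `𝔻` with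
`φ_ζ ζ = 0`, with inverse `φ_{-ζ}`, so it suffices to show that `φ_ζ(G)` contains the disc of radius
`ρ = (|ζ| + r' - 1) / (1 - (1 - r') |ζ|)`. For `|w| < ρ` put `t = φ_{-ζ} w` and `σ = ζ / |ζ|`. Then
`t - σ = (1 - |ζ|) (w - σ) / (1 + conj ζ * w)`, so `|t - σ| ≤ (1 - |ζ|) (1 + |w|) / (1 - |ζ| |w|)`,
and `ρ` is exactly the radius at which this bound reaches `r'`. Hence
`|t - 1| < r' + (r - r') = r`, i.e. `t ∈ 𝔻_r ⊆ G`.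
-/

open Metric Set

/-- The squeezing function of a plane domain `G` at a point `ζ`. -/
noncomputable def squeezingFn1 (G : Set ℂ) (ζ : ℂ) : ℝ :=
  sSup (insert 0 {ρ : ℝ | 0 < ρ ∧ ∃ f : ℂ → ℂ,
    DifferentiableOn ℂ f G ∧ Set.InjOn f G ∧ f '' G ⊆ Metric.ball 0 1 ∧ f ζ = 0 ∧
    Metric.ball 0 ρ ⊆ f '' G})

open ComplexConjugate

noncomputable def diskMobius (a t : ℂ) : ℂ := (t - a) / (1 - conj a * t)

theorem diskMobius_self (a : ℂ) : diskMobius a a = 0 := by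
  simp [diskMobius]

theorem one_sub_conj_mul_ne_zero {a t : ℂ} (h : ‖a‖ * ‖t‖ < 1) : 1 - conj a * t ≠ 0 :=
  sub_ne_zero.mpr <| ne_of_apply_ne norm <| by
    rw [norm_one, norm_mul, Complex.norm_conj]; exact h.ne'

theorem sq_norm_one_sub_conj_mul_sub_sq_norm_sub (a t : ℂ) :
    ‖1 - conj a * t‖ ^ 2 - ‖t - a‖ ^ 2 = (1 - ‖a‖ ^ 2) * (1 - ‖t‖ ^ 2) := by
  simp only [Complex.sq_norm, Complex.normSq_apply, Complex.sub_re, Complex.sub_im, Complex.mul_re,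
    Complex.mul_im, Complex.conj_re, Complex.conj_im, Complex.one_re, Complex.one_im]
  ring

theorem norm_diskMobius_lt_one {a t : ℂ} (ha : ‖a‖ < 1) (ht : ‖t‖ < 1) :
    ‖diskMobius a t‖ < 1 := by
  have hD : 1 - conj a * t ≠ 0 :=
    one_sub_conj_mul_ne_zero (by nlinarith [norm_nonneg a, norm_nonneg t])
  rw [diskMobius, norm_div, div_lt_one (norm_pos_iff.mpr hD)]
  refine lt_of_pow_lt_pow_left₀ 2 (norm_nonneg _) ?_
  have := sq_norm_one_sub_conj_mul_sub_sq_norm_sub a t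
  have : 0 < (1 - ‖a‖ ^ 2) * (1 - ‖t‖ ^ 2) := by
    apply mul_pos <;> nlinarith [norm_nonneg a, norm_nonneg t]
  linarith

theorem diskMobius_neg_diskMobius {a t : ℂ} (ha : ‖a‖ < 1) (ht : ‖t‖ < 1) :
    diskMobius (-a) (diskMobius a t) = t := by
  have hD : 1 - conj a * t ≠ 0 :=
    one_sub_conj_mul_ne_zero (by nlinarith [norm_nonneg a, norm_nonneg t])
  have ha' : 1 - conj a * a ≠ 0 := one_sub_conj_mul_ne_zero (by nlinarith [norm_nonneg a])
  simp only [diskMobius, map_neg, sub_neg_eq_add, neg_mul]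
  rw [div_add' _ _ _ hD, mul_div_assoc', add_div' _ _ _ hD, div_div_div_cancel_right₀ hD,
    div_eq_iff (by contrapose! ha'; linear_combination ha')]
  ring

theorem mapsTo_diskMobius {a : ℂ} (ha : ‖a‖ < 1) : MapsTo (diskMobius a) (ball 0 1) (ball 0 1) :=
  fun _ ht => mem_ball_zero_iff.mpr <| norm_diskMobius_lt_one ha (mem_ball_zero_iff.mp ht)

theorem injOn_diskMobius {a : ℂ} (ha : ‖a‖ < 1) : InjOn (diskMobius a) (ball 0 1) :=
  LeftInvOn.injOn (f₁' := diskMobius (-a)) fun _ ht =>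
    diskMobius_neg_diskMobius ha (mem_ball_zero_iff.mp ht)

theorem differentiableOn_diskMobius {a : ℂ} (ha : ‖a‖ < 1) :
    DifferentiableOn ℂ (diskMobius a) (ball 0 1) := by
  refine DifferentiableOn.div (by fun_prop) (by fun_prop) fun _ ht => ?_
  exact one_sub_conj_mul_ne_zero (by nlinarith [norm_nonneg a, mem_ball_zero_iff.mp ht])

theorem diskMobius_neg_sub_div_norm (a w : ℂ) (hD : 1 + conj a * w ≠ 0) :
    diskMobius (-a) w - a / ‖a‖ = (1 - ‖a‖) * (w - a / ‖a‖) / (1 + conj a * w) := by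
  rcases eq_or_ne a 0 with rfl | ha0
  · simp [diskMobius]
  have hn : (‖a‖ : ℂ) ≠ 0 := by exact_mod_cast norm_ne_zero_iff.mpr ha0
  have hconj : conj a * a = (‖a‖ : ℂ) ^ 2 := by rw [mul_comm, Complex.mul_conj']
  simp only [diskMobius, map_neg, sub_neg_eq_add, neg_mul]
  rw [div_sub_div _ _ hD hn, sub_div' hn, mul_div_assoc', div_div,
    div_eq_div_iff (mul_ne_zero hD hn) (mul_ne_zero hn hD)]
  linear_combination (-w * ‖a‖ - w ^ 2 * ‖a‖ * conj a) * hconj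

theorem norm_diskMobius_neg_sub_div_norm_le {a w : ℂ} (ha : ‖a‖ < 1) (hw : ‖w‖ < 1) :
    ‖diskMobius (-a) w - a / ‖a‖‖ ≤ (1 - ‖a‖) * (‖w‖ + 1) / (1 - ‖a‖ * ‖w‖) := by
  have hpos : 0 < 1 - ‖a‖ * ‖w‖ := by nlinarith [norm_nonneg a, norm_nonneg w]
  have hD : 1 - ‖a‖ * ‖w‖ ≤ ‖1 + conj a * w‖ := by
    simpa using norm_sub_norm_le (1 : ℂ) (-(conj a * w))
  have hunit : ‖a / ‖a‖‖ ≤ 1 := by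
    rw [norm_div, Complex.norm_real, norm_norm]
    exact div_self_le_one _
  have hnum : ‖(1 : ℂ) - ‖a‖‖ = 1 - ‖a‖ := by
    rw [← Complex.ofReal_one, ← Complex.ofReal_sub, Complex.norm_real,
      Real.norm_of_nonneg (by linarith)]
  rw [diskMobius_neg_sub_div_norm a w (norm_pos_iff.mp (hpos.trans_le hD)), norm_div, norm_mul,
    hnum]
  gcongr
  exact (norm_sub_le _ _).trans (by gcongr)

theorem one_sub_mul_add_one_lt_mul_one_sub_mul {a r x : ℝ} (hden : 0 < 1 - (1 - r) * a)
    (hx : x < (a + r - 1) / (1 - (1 - r) * a)) : (1 - a) * (x + 1) < r * (1 - a * x) := by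
  rw [lt_div_iff₀ hden] at hx
  linarith

theorem norm_diskMobius_neg_sub_div_norm_lt {a w : ℂ} {r : ℝ} (ha : ‖a‖ < 1) (hw : ‖w‖ < 1)
    (hden : 0 < 1 - (1 - r) * ‖a‖) (hwr : ‖w‖ < (‖a‖ + r - 1) / (1 - (1 - r) * ‖a‖)) :
    ‖diskMobius (-a) w - a / ‖a‖‖ < r := by
  have hpos : 0 < 1 - ‖a‖ * ‖w‖ := by nlinarith [norm_nonneg a, norm_nonneg w]
  refine (norm_diskMobius_neg_sub_div_norm_le ha hw).trans_lt ?_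
  rw [div_lt_iff₀ hpos]
  exact one_sub_mul_add_one_lt_mul_one_sub_mul hden hwr

theorem le_squeezingFn1 {G : Set ℂ} {ζ : ℂ} {ρ : ℝ} {f : ℂ → ℂ} (hρ : 0 < ρ)
    (hf : DifferentiableOn ℂ f G) (hinj : InjOn f G) (hmaps : MapsTo f G (ball 0 1))
    (hζ : f ζ = 0) (hball : ball 0 ρ ⊆ f '' G) : ρ ≤ squeezingFn1 G ζ := by
  refine le_csSup ⟨1, ?_⟩ (mem_insert_of_mem _ ⟨hρ, f, hf, hinj, hmaps.image_subset, hζ, hball⟩)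
  rintro _ (rfl | ⟨-, g, -, -, hg, -, hgball⟩)
  · exact zero_le_one
  · by_contra! h
    have h1 : (1 : ℂ) ∈ ball 0 _ := mem_ball_zero_iff.mpr (by simpa using h)
    simpa using hg (hgball h1)

theorem squeezing_lower_bound_near_one_general (G : Set ℂ)
    (r : ℝ) (hr2 : r < 2)
    (h1 : {ζ : ℂ | ‖ζ‖ < 1 ∧ ‖ζ - 1‖ < r} ⊆ G)
    (h2 : G ⊆ Metric.ball 0 1) :
    ∀ ζ ∈ G, ζ ≠ 0 → ∀ r' : ℝ, 1 - ‖ζ‖ < r' → r' < r →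
      ‖ζ / (‖ζ‖ : ℂ) - 1‖ < r - r' →
      (‖ζ‖ + r' - 1) / (1 - (1 - r') * ‖ζ‖) ≤ squeezingFn1 G ζ := by
  intro ζ hζG _ r' hr' hr'r hσ
  have hζ : ‖ζ‖ < 1 := mem_ball_zero_iff.mp (h2 hζG)
  have hden : 0 < 1 - (1 - r') * ‖ζ‖ := by nlinarith [norm_nonneg ζ]
  have hρ1 : (‖ζ‖ + r' - 1) / (1 - (1 - r') * ‖ζ‖) < 1 := by
    rw [div_lt_one hden]; nlinarith
  refine le_squeezingFn1 (div_pos (by linarith) hden) ((differentiableOn_diskMobius hζ).mono h2)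
    ((injOn_diskMobius hζ).mono h2) ((mapsTo_diskMobius hζ).mono_left h2) (diskMobius_self ζ) ?_
  intro w hw
  have hwρ := mem_ball_zero_iff.mp hw
  have hw1 := hwρ.trans hρ1
  have hζ' : ‖-ζ‖ < 1 := by rwa [norm_neg]
  refine ⟨diskMobius (-ζ) w, h1 ⟨norm_diskMobius_lt_one hζ' hw1, ?_⟩, ?_⟩
  · calc ‖diskMobius (-ζ) w - 1‖
        ≤ ‖diskMobius (-ζ) w - ζ / ‖ζ‖‖ + ‖ζ / ‖ζ‖ - 1‖ := norm_sub_le_norm_sub_add_norm_sub _ _ _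
      _ < r' + (r - r') := add_lt_add (norm_diskMobius_neg_sub_div_norm_lt hζ hw1 hden hwρ) hσ
      _ = r := by ring
  · simpa using diskMobius_neg_diskMobius hζ' hw1

theorem squeezing_lower_bound_near_one (G : Set ℂ) (hG : IsOpen G) (hGc : IsConnected G)
    (r : ℝ) (hr0 : 0 < r) (hr2 : r < 2)
    (h1 : {ζ : ℂ | ‖ζ‖ < 1 ∧ ‖ζ - 1‖ < r} ⊆ G)
    (h2 : G ⊆ Metric.ball 0 1) :
    ∀ ζ ∈ G, ζ ≠ 0 → ∀ r' : ℝ, 1 - ‖ζ‖ < r' → r' < r →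
      ‖ζ / (‖ζ‖ : ℂ) - 1‖ < r - r' →
      (‖ζ‖ + r' - 1) / (1 - (1 - r') * ‖ζ‖) ≤ squeezingFn1 G ζ :=
  squeezing_lower_bound_near_one_general G r hr2 h1 h2
end

section
/- Let D be a plane domain, a ∈ ∂D, and θ a conformal map from D into 𝔻 extending to a C¹-diffeomorphism of a neighborhood of a with θ(a) = 1 and θ'(a) ≠ 0. Then lim_{z→a, z∈D} δ_{θ(D)}(θ(z))/δ_D(z) = |θ'(a)|. -/
/-!
Near `a`, `θ` is `C¹` with derivative the similarity `v ↦ c v`, so on a small closed ball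
`B = closedBall a ρ` it is bi-Lipschitz with constants `‖c‖ ∓ ε`. For `z ∈ D` close to `a` both
boundary distances are local: `δ_D(z) = δ_Ω(z)` for `Ω = ball a ρ ∩ D`, and
`δ_{θ(D)}(θ z) = δ_{θ(Ω)}(θ z)`. For the latter, the nearest boundary point `q` of `θ(Ω)` is
close to `θ a`, hence not on `θ(∂B)`; if `q = θ u` with `u ∈ D`, then `u` lies outside `B`, and
since `θ` is open and injective on `D`, `θ(D \ B)` would be a neighbourhood of `q` disjoint from
`θ(Ω)`. Comparing `δ_Ω` and `δ_{θ(Ω)}` through the bi-Lipschitz bounds on `B` then squeezes the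
ratio between `‖c‖ - ε` and `‖c‖ + ε`.
-/

open Metric Set Filter Topology

theorem AnalyticOnNhd.isOpen_image_of_injOn {E : Type*} [NormedAddCommGroup E] [NormedSpace ℂ E]
    [Nontrivial E] {g : E → ℂ} {U s : Set E} (hg : AnalyticOnNhd ℂ g U) (hU : IsOpen U)
    (hinj : InjOn g U) (hsU : s ⊆ U) (hs : IsOpen s) : IsOpen (g '' s) := by
  refine isOpen_iff_mem_nhds.2 ?_
  rintro _ ⟨w, hw, rfl⟩
  refine ((hg w (hsU hw)).eventually_constant_or_nhds_le_map_nhds.resolve_left fun hconst => ?_)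
    (image_mem_map (hs.mem_nhds hw))
  obtain ⟨z, ⟨hzw, hzU⟩, hz⟩ := (((hconst.and (hU.mem_nhds (hsU hw))).filter_mono
    nhdsWithin_le_nhds).and (self_mem_nhdsWithin (s := {w}ᶜ))).exists
  exact hz (hinj hzU (hsU hw) hzw)

section Approximation

variable {E F : Type*} [NormedAddCommGroup E] [NormedSpace ℝ E] [NormedAddCommGroup F]
  [NormedSpace ℝ F] {f : E → F} {L : E →L[ℝ] F} {s : Set E} {ε : NNReal} {k : ℝ} {x y : E}

theorem ApproximatesLinearOn.sub_mul_dist_le (hf : ApproximatesLinearOn f L s ε)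
    (hL : ∀ v, ‖L v‖ = k * ‖v‖) (hx : x ∈ s) (hy : y ∈ s) :
    (k - ε) * dist x y ≤ dist (f x) (f y) := by
  have h := hf x hx y hy
  have := norm_sub_norm_le (L (x - y)) (f x - f y)
  rw [norm_sub_rev (L (x - y)), hL] at this
  rw [dist_eq_norm, dist_eq_norm]
  linarith

theorem ApproximatesLinearOn.dist_le_add_mul (hf : ApproximatesLinearOn f L s ε)
    (hL : ∀ v, ‖L v‖ = k * ‖v‖) (hx : x ∈ s) (hy : y ∈ s) :
    dist (f x) (f y) ≤ (k + ε) * dist x y := by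
  have h := hf x hx y hy
  have := norm_sub_norm_le (f x - f y) (L (x - y))
  rw [hL] at this
  rw [dist_eq_norm, dist_eq_norm]
  linarith

end Approximation

theorem infDist_compl_ball_inter_eq {α : Type*} [PseudoMetricSpace α] {D : Set α} {a z : α}
    {ρ : ℝ} (ha : a ∉ D) (hz : 2 * dist z a ≤ ρ) :
    infDist z (ball a ρ ∩ D)ᶜ = infDist z Dᶜ := by
  refine le_antisymm
    (infDist_le_infDist_of_subset (compl_subset_compl.2 inter_subset_right) ⟨a, ha⟩) ?_
  refine (le_infDist (s := (ball a ρ ∩ D)ᶜ) ⟨a, fun h => ha h.2⟩).2 fun w hw => ?_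
  rcases not_and_or.1 hw with hwa | hwD
  · have hρw : ρ ≤ dist w a := not_lt.1 hwa
    calc infDist z Dᶜ ≤ dist z a := infDist_le_dist_of_mem ha
      _ ≤ dist z w := by linarith [dist_triangle w z a, dist_comm z w]
  · exact infDist_le_dist_of_mem hwD

theorem infDist_image_compl_le {E F : Type*} [NormedAddCommGroup E] [NormedSpace ℝ E]
    [FiniteDimensional ℝ E] [PseudoMetricSpace F] {f : E → F} {Ω K : Set E} {z : E} {k : ℝ}
    (hΩ : IsOpen Ω) (hΩ_ne : Ω ≠ univ) (hK : IsClosed K) (hΩK : Ω ⊆ K) (hinj : InjOn f K)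
    (hup : ∀ x ∈ K, ∀ y ∈ K, dist (f x) (f y) ≤ k * dist x y) (hz : z ∈ Ω) :
    infDist (f z) (f '' Ω)ᶜ ≤ k * infDist z Ωᶜ := by
  obtain ⟨w, hw, hzw⟩ := exists_mem_frontier_infDist_compl_eq_dist hz hΩ_ne
  rw [hΩ.frontier_eq] at hw
  have hwK : w ∈ K := hK.closure_subset_iff.2 hΩK hw.1
  have hfw : f w ∉ f '' Ω := fun ⟨x, hx, hxw⟩ => hw.2 (hinj (hΩK hx) hwK hxw ▸ hx)
  calc infDist (f z) (f '' Ω)ᶜ ≤ dist (f z) (f w) := infDist_le_dist_of_mem hfw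
    _ ≤ k * dist z w := hup z (hΩK hz) w hwK
    _ = k * infDist z Ωᶜ := by rw [hzw]

theorem le_infDist_image_compl {E F : Type*} [PseudoMetricSpace E] [NormedAddCommGroup F]
    [NormedSpace ℝ F] [FiniteDimensional ℝ F] {f : E → F} {Ω K : Set E} {z : E} {k : ℝ}
    (hfΩ : IsOpen (f '' Ω)) (hfΩ_ne : f '' Ω ≠ univ) (hK : IsCompact K) (hΩK : Ω ⊆ K)
    (hf : ContinuousOn f K) (hlow : ∀ x ∈ K, ∀ y ∈ K, k * dist x y ≤ dist (f x) (f y))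
    (hz : z ∈ Ω) :
    k * infDist z Ωᶜ ≤ infDist (f z) (f '' Ω)ᶜ := by
  obtain ⟨q, hq, hzq⟩ := exists_mem_frontier_infDist_compl_eq_dist (mem_image_of_mem f hz) hfΩ_ne
  rw [hfΩ.frontier_eq] at hq
  obtain ⟨w, hwK, rfl⟩ : q ∈ f '' K :=
    closure_minimal (image_mono hΩK) (hK.image_of_continuousOn hf).isClosed hq.1
  have hwΩ : w ∉ Ω := fun hw => hq.2 (mem_image_of_mem f hw)
  rcases le_or_gt k 0 with hk | hk
  · exact (mul_nonpos_of_nonpos_of_nonneg hk infDist_nonneg).trans infDist_nonneg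
  calc k * infDist z Ωᶜ ≤ k * dist z w := by gcongr; exact infDist_le_dist_of_mem hwΩ
    _ ≤ dist (f z) (f w) := hlow z (hΩK hz) w hwK
    _ = infDist (f z) (f '' Ω)ᶜ := hzq.symm

section LocalImage

variable {E F : Type*} [PseudoMetricSpace E] {f : E → F} {D : Set E} {a : E} {ρ : ℝ}

theorem notMem_image_of_mem_closure_image_ball_inter [TopologicalSpace F] {q : F}
    (hD : IsOpen D) (hinjD : InjOn f D) (hopen : ∀ s ⊆ D, IsOpen s → IsOpen (f '' s))
    (hq : q ∈ closure (f '' (ball a ρ ∩ D)) \ f '' (ball a ρ ∩ D))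
    (hqS : q ∉ f '' sphere a ρ) : q ∉ f '' D := by
  rintro ⟨u, huD, rfl⟩
  rcases lt_trichotomy (dist u a) ρ with hu | hu | hu
  · exact hq.2 ⟨u, ⟨hu, huD⟩, rfl⟩
  · exact hqS ⟨u, hu, rfl⟩
  · have hV : IsOpen (f '' (D ∩ (closedBall a ρ)ᶜ)) :=
      hopen _ inter_subset_left (hD.inter isClosed_closedBall.isOpen_compl)
    obtain ⟨_, ⟨v, hv, rfl⟩, x, hx, hvx⟩ := _root_.mem_closure_iff.1 hq.1 _ hV
      ⟨u, ⟨huD, fun h => (mem_closedBall.1 h).not_gt hu⟩, rfl⟩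
    exact hv.2 (hinjD hx.2 hv.1 hvx ▸ ball_subset_closedBall hx.1)

theorem infDist_image_compl_ball_inter_eq [NormedAddCommGroup F] [NormedSpace ℝ F]
    [FiniteDimensional ℝ F] {z : E} {p : F} {r : ℝ}
    (hD : IsOpen D) (hinjD : InjOn f D) (hopen : ∀ s ⊆ D, IsOpen s → IsOpen (f '' s))
    (hp : p ∉ f '' (ball a ρ ∩ D)) (hr : ball p r ⊆ (f '' sphere a ρ)ᶜ)
    (hz : z ∈ ball a ρ ∩ D) (hzp : 2 * dist (f z) p < r) :
    infDist (f z) (f '' (ball a ρ ∩ D))ᶜ = infDist (f z) (f '' D)ᶜ := by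
  have hΩD : ball a ρ ∩ D ⊆ D := inter_subset_right
  obtain ⟨q, hq, hzq⟩ := exists_mem_frontier_infDist_compl_eq_dist (mem_image_of_mem f hz)
    ((ne_univ_iff_exists_notMem _).2 ⟨p, hp⟩)
  rw [(hopen _ hΩD (isOpen_ball.inter hD)).frontier_eq] at hq
  have hzq_le : dist (f z) q ≤ dist (f z) p := hzq ▸ infDist_le_dist_of_mem hp
  have hqS : q ∉ f '' sphere a ρ :=
    hr (mem_ball.2 (by linarith [dist_triangle q (f z) p, dist_comm q (f z)]))
  have hqD : q ∉ f '' D := notMem_image_of_mem_closure_image_ball_inter hD hinjD hopen hq hqS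
  refine le_antisymm
    (infDist_le_infDist_of_subset (compl_subset_compl.2 (image_mono hΩD)) ⟨q, hqD⟩) ?_
  rw [hzq]
  exact infDist_le_dist_of_mem hqD

end LocalImage

theorem eventually_infDist_image_compl_bounds {E F : Type*} [NormedAddCommGroup E]
    [NormedSpace ℝ E] [FiniteDimensional ℝ E] [NormedAddCommGroup F] [NormedSpace ℝ F]
    [FiniteDimensional ℝ F] {f : E → F} {D : Set E} {a : E} {ρ k₁ k₂ : ℝ}
    (hD : IsOpen D) (ha : a ∉ D) (hinjD : InjOn f D)
    (hopen : ∀ s ⊆ D, IsOpen s → IsOpen (f '' s)) (hρ : 0 < ρ) (hk₁ : 0 < k₁)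
    (hlow : ∀ x ∈ closedBall a ρ, ∀ y ∈ closedBall a ρ, k₁ * dist x y ≤ dist (f x) (f y))
    (hup : ∀ x ∈ closedBall a ρ, ∀ y ∈ closedBall a ρ, dist (f x) (f y) ≤ k₂ * dist x y) :
    ∀ᶠ z in 𝓝[D] a, k₁ * infDist z Dᶜ ≤ infDist (f z) (f '' D)ᶜ ∧
      infDist (f z) (f '' D)ᶜ ≤ k₂ * infDist z Dᶜ := by
  set Ω := ball a ρ ∩ D
  have hΩ : IsOpen Ω := isOpen_ball.inter hD
  have hΩB : Ω ⊆ closedBall a ρ := inter_subset_left.trans ball_subset_closedBall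
  have haB : a ∈ closedBall a ρ := mem_closedBall_self hρ.le
  have hinj : InjOn f (closedBall a ρ) := fun x hx y hy hxy => by
    have h := hlow x hx y hy
    rw [hxy, dist_self] at h
    exact dist_le_zero.1 (nonpos_of_mul_nonpos_right h hk₁)
  have hcont : ContinuousOn f (closedBall a ρ) :=
    (LipschitzOnWith.of_dist_le_mul (K := k₂.toNNReal) fun x hx y hy => (hup x hx y hy).trans
      (mul_le_mul_of_nonneg_right (Real.le_coe_toNNReal k₂) dist_nonneg)).continuousOn
  have hfa : f a ∉ f '' Ω := fun ⟨x, hx, hxa⟩ => ha (hinj (hΩB hx) haB hxa ▸ hx.2)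
  have hfaS : f a ∉ f '' sphere a ρ := fun ⟨x, hx, hxa⟩ =>
    (ne_of_mem_sphere hx hρ.ne') (hinj (sphere_subset_closedBall hx) haB hxa)
  obtain ⟨r, hr, hrS⟩ := isOpen_iff.1 ((isCompact_sphere a ρ).image_of_continuousOn
    (hcont.mono sphere_subset_closedBall)).isClosed.isOpen_compl _ hfaS
  have hnear : ∀ᶠ z in 𝓝 a, 2 * dist z a < ρ ∧ 2 * dist (f z) (f a) < r := by
    filter_upwards [ball_mem_nhds a (half_pos hρ),
      (hcont.continuousAt (closedBall_mem_nhds a hρ)).eventually_mem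
        (ball_mem_nhds (f a) (half_pos hr))] with z hza hfz
    constructor <;> linarith [mem_ball.1 hza, mem_ball.1 hfz]
  filter_upwards [self_mem_nhdsWithin, nhdsWithin_le_nhds hnear] with z hzD ⟨hza, hfz⟩
  have hzΩ : z ∈ Ω := ⟨mem_ball.2 (by linarith), hzD⟩
  rw [← infDist_compl_ball_inter_eq ha hza.le,
    ← infDist_image_compl_ball_inter_eq hD hinjD hopen hfa hrS hzΩ hfz]
  exact ⟨le_infDist_image_compl (hopen Ω inter_subset_right hΩ)
      ((ne_univ_iff_exists_notMem _).2 ⟨f a, hfa⟩) (isCompact_closedBall a ρ) hΩB hcont hlow hzΩ,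
    infDist_image_compl_le hΩ ((ne_univ_iff_exists_notMem _).2 ⟨a, fun h => ha h.2⟩)
      isClosed_closedBall hΩB hinj hup hzΩ⟩

theorem tendsto_div_of_forall_eventually_mul_le {α : Type*} {l : Filter α} {u v : α → ℝ} {k : ℝ}
    (hk : 0 < k) (hv : ∀ᶠ x in l, 0 < v x)
    (h : ∀ ε, 0 < ε → ε < k → ∀ᶠ x in l, (k - ε) * v x ≤ u x ∧ u x ≤ (k + ε) * v x) :
    Tendsto (fun x => u x / v x) l (𝓝 k) := by
  refine Metric.tendsto_nhds.2 fun ε hε => ?_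
  have hε' : 0 < min (ε / 2) (k / 2) := lt_min (half_pos hε) (half_pos hk)
  have hε'k : min (ε / 2) (k / 2) < k := (min_le_right _ _).trans_lt (half_lt_self hk)
  have hε'ε : min (ε / 2) (k / 2) < ε := (min_le_left _ _).trans_lt (half_lt_self hε)
  filter_upwards [hv, h _ hε' hε'k] with x hvx ⟨hlow, hup⟩
  have h₁ := (le_div_iff₀ hvx).2 hlow
  have h₂ := (div_le_iff₀ hvx).2 hup
  rw [Real.dist_eq, abs_sub_lt_iff]
  constructor <;> linarith

theorem boundary_distance_ratio_limit_general (D : Set ℂ) (hD : IsOpen D)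
    (a : ℂ) (ha : a ∈ frontier D)
    (U : Set ℂ) (hU : IsOpen U) (haU : a ∈ U)
    (θ : ℂ → ℂ) (hθ : DifferentiableOn ℂ θ D) (hinjD : Set.InjOn θ D)
    (hC1 : ContDiffOn ℝ 1 θ U)
    (c : ℂ) (hderiv : HasDerivAt θ c a) (hc : c ≠ 0) :
    Filter.Tendsto
      (fun z => Metric.infDist (θ z) (θ '' D)ᶜ / Metric.infDist z Dᶜ)
      (nhdsWithin a D) (nhds ‖c‖) := by
  have haD : a ∉ D := fun h => ha.2 (hD.interior_eq.symm ▸ h)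
  have hopen : ∀ s ⊆ D, IsOpen s → IsOpen (θ '' s) := fun _ =>
    (hθ.analyticOnNhd hD).isOpen_image_of_injOn hD hinjD
  have hstrict : HasStrictFDerivAt θ (fderiv ℝ θ a) a :=
    (hC1.contDiffAt (hU.mem_nhds haU)).hasStrictFDerivAt one_ne_zero
  have hL : ∀ v, ‖fderiv ℝ θ a v‖ = ‖c‖ * ‖v‖ := by
    simp [(hderiv.hasFDerivAt.restrictScalars ℝ).fderiv, mul_comm]
  refine tendsto_div_of_forall_eventually_mul_le (norm_pos_iff.2 hc) ?_ fun ε hε hεc => ?_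
  · filter_upwards [self_mem_nhdsWithin] with z hz
    exact (hD.isClosed_compl.notMem_iff_infDist_pos ⟨a, haD⟩).1 (not_not.2 hz)
  obtain ⟨s, hs, happrox⟩ := hstrict.approximates_deriv_on_nhds (c := ⟨ε, hε.le⟩) (Or.inr hε)
  obtain ⟨ρ, hρ, hρs⟩ := nhds_basis_closedBall.mem_iff.1 hs
  have happrox := happrox.mono_set hρs
  exact eventually_infDist_image_compl_bounds hD haD hinjD hopen hρ (sub_pos.2 hεc)
    (fun _ hx _ hy => happrox.sub_mul_dist_le hL hx hy)
    (fun _ hx _ hy => happrox.dist_le_add_mul hL hx hy)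

theorem boundary_distance_ratio_limit (D : Set ℂ) (hD : IsOpen D) (hDc : IsConnected D)
    (a : ℂ) (ha : a ∈ frontier D)
    (U : Set ℂ) (hU : IsOpen U) (haU : a ∈ U)
    (θ : ℂ → ℂ) (hθ : DifferentiableOn ℂ θ D) (hinjD : Set.InjOn θ D)
    (him : θ '' D ⊆ Metric.ball 0 1)
    (hC1 : ContDiffOn ℝ 1 θ U) (hinjU : Set.InjOn θ U)
    (hθa : θ a = 1) (c : ℂ) (hderiv : HasDerivAt θ c a) (hc : c ≠ 0) :
    Filter.Tendsto
      (fun z => Metric.infDist (θ z) (θ '' D)ᶜ / Metric.infDist z Dᶜ)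
      (nhdsWithin a D) (nhds ‖c‖) :=
  boundary_distance_ratio_limit_general D hD a ha U hU haU θ hθ hinjD hC1 c hderiv hc
end
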